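/- arXiv:math/0303021 — 6 statements merged into one kernel-verified Lean document; each statement's English description precedes it below -/
import Mathlib

section
/- Let n, k be coprime with 1 ≤ k < n, let n/k = n_1 - 1/(n_2 - ... - 1/n_p) and n/(n-k) = n_1' - 1/(n_2' - ... - 1/n_{p'}') be the continued fraction expansions with all partial quotients ≥ 2. Then p' = n_1 + ... + n_p - 2p + 1 and n_1' + ... + n_{p'}' = 2(n_1 + ... + n_p) - 3p + 1. -/
/-- The value of the negative continued fraction `n_1 - 1/(n_2 - 1/(… - 1/n_p))`. -/
def negCF : List ℤ → ℚ
  | [] => 0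
  | [a] => (a : ℚ)
  | a :: l => (a : ℚ) - 1 / negCF l

lemma negCF_cons (a b : ℤ) (t : List ℤ) : negCF (a :: b :: t) = (a:ℚ) - 1 / negCF (b :: t) := rfl

lemma negCF_head_add (a : ℤ) (t : List ℤ) : negCF ((a+1) :: t) = negCF (a :: t) + 1 := by
  cases t with
  | nil => simp [negCF]
  | cons b s => rw [negCF_cons, negCF_cons]; push_cast; ring

lemma one_lt_negCF : ∀ L : List ℤ, L ≠ [] → (∀ a ∈ L, 2 ≤ a) → 1 < negCF L
  | [], h, _ => absurd rfl h
  | [a], _, h2 => by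
    have := h2 a (by simp)
    simp only [negCF]
    exact_mod_cast lt_of_lt_of_le one_lt_two (by exact_mod_cast this)
  | a :: b :: t, _, h2 => by
    have ih := one_lt_negCF (b :: t) (by simp) (fun x hx => h2 x (List.mem_cons_of_mem _ hx))
    have ha : (2:ℚ) ≤ a := by exact_mod_cast h2 a (by simp)
    rw [negCF_cons]
    have h1 : 1 / negCF (b :: t) < 1 := by
      rw [div_lt_one (by linarith)]; linarith
    linarith

lemma negCF_bounds : ∀ (a : ℤ) (t : List ℤ), (∀ x ∈ a :: t, 2 ≤ x) →
    ((a:ℚ) - 1 < negCF (a :: t) ∧ negCF (a :: t) ≤ a) ∧ (t = [] ↔ negCF (a :: t) = (a:ℚ)) := by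
  intro a t h2
  cases t with
  | nil => simp [negCF]
  | cons b s =>
    have ih := one_lt_negCF (b :: s) (by simp) (fun x hx => h2 x (List.mem_cons_of_mem _ hx))
    rw [negCF_cons]
    have h1 : 1 / negCF (b :: s) < 1 := by rw [div_lt_one (by linarith)]; linarith
    have h0 : 0 < 1 / negCF (b :: s) := by positivity
    constructor
    · constructor <;> linarith
    · constructor
      · intro h; simp at h
      · intro h; linarith

lemma negCF_inj : ∀ L M : List ℤ, L ≠ [] → M ≠ [] → (∀ a ∈ L, 2 ≤ a) → (∀ a ∈ M, 2 ≤ a) →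
    negCF L = negCF M → L = M
  | [], _, h, _, _, _, _ => absurd rfl h
  | _ :: _, [], _, h, _, _, _ => absurd rfl h
  | a :: t, b :: s, _, _, h2, h2', heq => by
    have hb1 := negCF_bounds a t h2
    have hb2 := negCF_bounds b s h2'
    have hab : a = b := by
      have e1 : (a:ℚ) - 1 < (b:ℚ) := lt_of_lt_of_le (heq ▸ hb1.1.1) hb2.1.2
      have e2 : (b:ℚ) - 1 < (a:ℚ) := lt_of_lt_of_le (heq ▸ hb2.1.1) hb1.1.2
      have e1' : a - 1 < b := by exact_mod_cast e1
      have e2' : b - 1 < a := by exact_mod_cast e2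
      omega
    subst hab
    rcases eq_or_ne t [] with rfl | ht
    · rcases eq_or_ne s [] with rfl | hs
      · rfl
      · exfalso
        have : negCF (a :: s) = (a:ℚ) := by rw [← heq]; exact (hb1.2.mp rfl)
        exact hs (hb2.2.mpr this)
    · rcases eq_or_ne s [] with rfl | hs
      · exfalso
        have : negCF (a :: t) = (a:ℚ) := heq.trans (hb2.2.mp rfl)
        exact ht (hb1.2.mpr this)
      · obtain ⟨c, t', rfl⟩ := List.exists_cons_of_ne_nil ht
        obtain ⟨d, s', rfl⟩ := List.exists_cons_of_ne_nil hs
        have h2t : ∀ x ∈ c :: t', 2 ≤ x := fun x hx => h2 x (List.mem_cons_of_mem _ hx)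
        have h2s : ∀ x ∈ d :: s', 2 ≤ x := fun x hx => h2' x (List.mem_cons_of_mem _ hx)
        have p1 := one_lt_negCF (c :: t') (by simp) h2t
        have p2 := one_lt_negCF (d :: s') (by simp) h2s
        rw [negCF_cons, negCF_cons] at heq
        have : negCF (c :: t') = negCF (d :: s') := by
          have h' : 1 / negCF (c :: t') = 1 / negCF (d :: s') := by linarith
          field_simp at h'
          linarith
        have := negCF_inj (c :: t') (d :: s') (by simp) (by simp) h2t h2s this
        rw [this]

lemma negCF_cons' (a : ℤ) (l : List ℤ) (hl : l ≠ []) :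
    negCF (a :: l) = (a:ℚ) - 1 / negCF l := by
  obtain ⟨b, t, rfl⟩ := List.exists_cons_of_ne_nil hl
  exact negCF_cons a b t

lemma negCF_main : ∀ n k : ℕ, Nat.Coprime n k → 1 ≤ k → k < n →
    ∃ L L' : List ℤ, L ≠ [] ∧ L' ≠ [] ∧ (∀ a ∈ L, 2 ≤ a) ∧ (∀ a ∈ L', 2 ≤ a) ∧
    negCF L = (n:ℚ) / (k:ℚ) ∧ negCF L' = (n:ℚ) / ((n:ℚ) - (k:ℚ)) ∧
    (L'.length : ℤ) = L.sum - 2 * (L.length : ℤ) + 1 ∧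
    L'.sum = 2 * L.sum - 3 * (L.length : ℤ) + 1 := by
  intro n
  induction n using Nat.strong_induction_on with
  | _ n IH =>
    intro k hcop hk hkn
    rcases lt_trichotomy (2*k) n with hlt | heqn | hgt
    · -- case A : predecessor (n-k, k)
      have hcop' : Nat.Coprime (n-k) k :=
        (Nat.coprime_sub_self_left hkn.le).mpr hcop
      obtain ⟨L, L', hL, hL', h2, h2', hcf, hcf', hlen, hsum⟩ :=
        IH (n-k) (by omega) k hcop' hk (by omega)
      obtain ⟨a, t, rfl⟩ := List.exists_cons_of_ne_nil hL
      have hnk : ((n-k : ℕ) : ℚ) = (n:ℚ) - (k:ℚ) := by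
        push_cast [Nat.cast_sub hkn.le]; ring
      have hk0 : (k:ℚ) ≠ 0 := Nat.cast_ne_zero.mpr (by omega)
      have hnk0 : (n:ℚ) - (k:ℚ) ≠ 0 := by
        have : (k:ℚ) < (n:ℚ) := by exact_mod_cast hkn
        linarith
      have hn2k0 : (n:ℚ) - (k:ℚ) - (k:ℚ) ≠ 0 := by
        have : 2*(k:ℚ) < (n:ℚ) := by exact_mod_cast hlt
        intro h; linarith [h]
      have hv' := one_lt_negCF L' hL' h2'
      refine ⟨(a+1) :: t, 2 :: L', by simp, by simp, ?_, ?_, ?_, ?_, ?_, ?_⟩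
      · intro x hx
        rcases List.mem_cons.mp hx with rfl | hx
        · have := h2 a (by simp); omega
        · exact h2 x (List.mem_cons_of_mem _ hx)
      · intro x hx
        rcases List.mem_cons.mp hx with rfl | hx
        · exact le_refl 2
        · exact h2' x hx
      · rw [negCF_head_add, hcf, hnk]
        field_simp
        try ring
      · rw [negCF_cons' 2 L' hL', hcf', hnk]
        field_simp
        try ring
      · simp only [List.sum_cons, List.length_cons] at *
        push_cast at *
        linarith
      · simp only [List.sum_cons, List.length_cons] at *
        push_cast at *
        linarith
    · -- 2k = n forces n = 2, k = 1
      have hk1 : k = 1 := by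
        have hdk : k ∣ n := ⟨2, by omega⟩
        have hd : k ∣ Nat.gcd n k := Nat.dvd_gcd hdk dvd_rfl
        rw [Nat.Coprime.gcd_eq_one hcop] at hd
        exact Nat.dvd_one.mp hd
      subst hk1
      have hn2 : n = 2 := by omega
      subst hn2
      refine ⟨[2], [2], by simp, by simp, by simp, by simp, ?_, ?_, by simp [List.sum_cons], by simp [List.sum_cons]⟩
      · show (2:ℚ) = _ ; norm_num
      · show (2:ℚ) = _ ; norm_num
    · -- case B : predecessor (k, n-k)
      have hcop' : Nat.Coprime k (n-k) :=
        (Nat.coprime_sub_self_right hkn.le).mpr hcop.symm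
      obtain ⟨M, M', hM, hM', h2, h2', hcf, hcf', hlen, hsum⟩ :=
        IH k hkn (n-k) hcop' (by omega) (by omega)
      obtain ⟨a, t, rfl⟩ := List.exists_cons_of_ne_nil hM
      have hnk : ((n-k : ℕ) : ℚ) = (n:ℚ) - (k:ℚ) := by
        push_cast [Nat.cast_sub hkn.le]; ring
      have hk0 : (k:ℚ) ≠ 0 := Nat.cast_ne_zero.mpr (by omega)
      have hn0 : (n:ℚ) ≠ 0 := Nat.cast_ne_zero.mpr (by omega)
      have hnk0 : (n:ℚ) - (k:ℚ) ≠ 0 := by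
        have : (k:ℚ) < (n:ℚ) := by exact_mod_cast hkn
        linarith
      have h2kn0 : (k:ℚ) - ((n:ℚ) - (k:ℚ)) ≠ 0 := by
        have : (n:ℚ) < 2*(k:ℚ) := by exact_mod_cast hgt
        intro h; linarith [h]
      have hvM' := one_lt_negCF M' hM' h2'
      rw [hnk] at hcf hcf'
      refine ⟨2 :: M', (a+1) :: t, by simp, by simp, ?_, ?_, ?_, ?_, ?_, ?_⟩
      · intro x hx
        rcases List.mem_cons.mp hx with rfl | hx
        · exact le_refl 2
        · exact h2' x hx
      · intro x hx
        rcases List.mem_cons.mp hx with rfl | hx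
        · have := h2 a (by simp); omega
        · exact h2 x (List.mem_cons_of_mem _ hx)
      · rw [negCF_cons' 2 M' hM', hcf']
        field_simp
        try ring
      · rw [negCF_head_add, hcf]
        field_simp
        try ring
      · simp only [List.sum_cons, List.length_cons] at *
        push_cast at *
        linarith
      · simp only [List.sum_cons, List.length_cons] at *
        push_cast at *
        linarith

/-- If `n/k = n_1 - … - 1/n_p` and `n/(n-k) = n_1' - … - 1/n_{p'}'` are the
negative continued fraction expansions (all partial quotients ≥ 2), then
`p' = n_1 + … + n_p - 2p + 1` and `n_1' + … + n_{p'}' = 2(n_1 + … + n_p) - 3p + 1`. -/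
theorem negCF_dual_length_sum (n k : ℕ) (hcop : Nat.Coprime n k) (hk : 1 ≤ k) (hkn : k < n)
    (L L' : List ℤ) (hL : L ≠ []) (hL' : L' ≠ [])
    (h2 : ∀ a ∈ L, 2 ≤ a) (h2' : ∀ a ∈ L', 2 ≤ a)
    (hcf : negCF L = (n : ℚ) / (k : ℚ))
    (hcf' : negCF L' = (n : ℚ) / ((n : ℚ) - (k : ℚ))) :
    (L'.length : ℤ) = L.sum - 2 * (L.length : ℤ) + 1 ∧
    L'.sum = 2 * L.sum - 3 * (L.length : ℤ) + 1 := by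
  obtain ⟨M, M', hM, hM', g2, g2', gcf, gcf', glen, gsum⟩ := negCF_main n k hcop hk hkn
  have e1 : L = M := negCF_inj L M hL hM h2 g2 (by rw [hcf, gcf])
  have e2 : L' = M' := negCF_inj L' M' hL' hM' h2' g2' (by rw [hcf', gcf'])
  subst e1; subst e2
  exact ⟨glen, gsum⟩
end

section
/- Let λ(x,y) be any function of two variables (with values in a commutative ring, defined wherever needed). Define a product on the graded space F = ⊕_{α≥0} F_α, where F_α is the space of symmetric functions of α variables, by (f*g)(u_1,...,u_{α+β}) = (1/(α!β!)) Σ_{σ ∈ S_{α+β}} f(u_{σ(1)},...,u_{σ(α)}) g(u_{σ(α+1)},...,u_{σ(α+β)}) Π_{1≤i≤α, α+1≤j≤α+β} λ(u_{σ(i)}, u_{σ(j)}). Then this product is associative. -/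
open Finset

/-- The shuffle-type product with weight `lam`: for `f` a function of `α`
variables and `g` a function of `β` variables,
`(f*g)(u₁,…,u_{α+β}) = (1/(α!β!)) Σ_{σ ∈ S_{α+β}}
  f(u_{σ(1)},…,u_{σ(α)}) g(u_{σ(α+1)},…,u_{σ(α+β)})
  Π_{i ≤ α < j} λ(u_{σ(i)}, u_{σ(j)})`. -/
noncomputable def shuffleMul {U : Type*} (lam : U → U → ℂ) {α β : ℕ}
    (f : (Fin α → U) → ℂ) (g : (Fin β → U) → ℂ) : (Fin (α + β) → U) → ℂ :=
  fun u =>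
    (1 / ((α.factorial : ℂ) * (β.factorial : ℂ))) *
      ∑ σ : Equiv.Perm (Fin (α + β)),
        (f fun i => u (σ (Fin.castAdd β i))) * (g fun j => u (σ (Fin.natAdd α j))) *
          ∏ i : Fin α, ∏ j : Fin β,
            lam (u (σ (Fin.castAdd β i))) (u (σ (Fin.natAdd α j)))

/-!
Expanding either side, the inner sum over `S_{α+β}` (resp. `S_{β+γ}`) is absorbed into the outer
sum over `S_{α+β+γ}`: a permutation `τ` of the merged block extends to one of all letters, `σ ↦ στ`
is a bijection, and the weight `∏ λ` between the merged block and the remaining one does not see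
`τ`. Both products thus equal `1/(α!β!γ!)` times the sum over `ρ ∈ S_{α+β+γ}` of
`f, g, h` evaluated on the three consecutive blocks of `u ∘ ρ`, weighted by `λ` over all pairs
taken from distinct blocks in block order.
-/

open Equiv

theorem sum_sum_mul_right_eq_card_smul {G ι M : Type*} [Group G] [Fintype G] [Fintype ι]
    [AddCommMonoid M] (F : G → M) (φ : ι → G) :
    ∑ g, ∑ t, F (g * φ t) = Fintype.card ι • ∑ g, F g := by
  rw [sum_comm]
  exact (sum_congr rfl fun t _ => Equiv.sum_comp (Equiv.mulRight (φ t)) F).trans (by simp)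

namespace Fin

def castAddPerm {m : ℕ} (n : ℕ) (τ : Perm (Fin m)) : Perm (Fin (m + n)) :=
  finSumFinEquiv.permCongr (τ.sumCongr (Equiv.refl (Fin n)))

def natAddPerm (m : ℕ) {n : ℕ} (τ : Perm (Fin n)) : Perm (Fin (m + n)) :=
  finSumFinEquiv.permCongr ((Equiv.refl (Fin m)).sumCongr τ)

variable {m n : ℕ}

@[simp] theorem castAddPerm_castAdd (τ : Perm (Fin m)) (i : Fin m) :
    castAddPerm n τ (castAdd n i) = castAdd n (τ i) := by
  simp [castAddPerm, Equiv.permCongr_apply]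

@[simp] theorem castAddPerm_natAdd (τ : Perm (Fin m)) (j : Fin n) :
    castAddPerm n τ (natAdd m j) = natAdd m j := by
  simp [castAddPerm, Equiv.permCongr_apply]

@[simp] theorem natAddPerm_castAdd (τ : Perm (Fin n)) (i : Fin m) :
    natAddPerm m τ (castAdd n i) = castAdd n i := by
  simp [natAddPerm, Equiv.permCongr_apply]

@[simp] theorem natAddPerm_natAdd (τ : Perm (Fin n)) (j : Fin n) :
    natAddPerm m τ (natAdd m j) = natAdd m (τ j) := by
  simp [natAddPerm, Equiv.permCongr_apply]

end Fin

section CrossProd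

variable {U M : Type*} [CommMonoid M] (lam : U → U → M) {m n p : ℕ}

def crossProd (a : Fin m → U) (b : Fin n → U) : M :=
  ∏ i, ∏ j, lam (a i) (b j)

theorem crossProd_comp_perm_left (a : Fin m → U) (b : Fin n → U) (τ : Perm (Fin m)) :
    crossProd lam (a ∘ τ) b = crossProd lam a b :=
  Equiv.prod_comp τ fun i => ∏ j, lam (a i) (b j)

theorem crossProd_comp_perm_right (a : Fin m → U) (b : Fin n → U) (τ : Perm (Fin n)) :
    crossProd lam a (b ∘ τ) = crossProd lam a b :=
  prod_congr rfl fun i _ => Equiv.prod_comp τ fun j => lam (a i) (b j)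

theorem crossProd_split_left (a : Fin (m + n) → U) (b : Fin p → U) :
    crossProd lam a b = crossProd lam (a ∘ Fin.castAdd n) b * crossProd lam (a ∘ Fin.natAdd m) b :=
  Fin.prod_univ_add _

theorem crossProd_split_right (a : Fin m → U) (b : Fin (n + p) → U) :
    crossProd lam a b =
      crossProd lam a (b ∘ Fin.castAdd p) * crossProd lam a (b ∘ Fin.natAdd n) := by
  simp only [crossProd, Fin.prod_univ_add, prod_mul_distrib, Function.comp_apply]

end CrossProd

section Summands

variable {U M : Type*} [CommMonoid M] (lam : U → U → M) {α β γ : ℕ}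

def shuffleSummand (f : (Fin α → U) → M) (g : (Fin β → U) → M)
    (a : Fin α → U) (b : Fin β → U) : M :=
  f a * g b * crossProd lam a b

def shuffleSummand₃ (f : (Fin α → U) → M) (g : (Fin β → U) → M) (h : (Fin γ → U) → M)
    (a : Fin α → U) (b : Fin β → U) (c : Fin γ → U) : M :=
  f a * g b * h c * (crossProd lam a b * crossProd lam a c * crossProd lam b c)

end Summands

section ShuffleMul

variable {U : Type*} (lam : U → U → ℂ) {α β γ : ℕ}
  (f : (Fin α → U) → ℂ) (g : (Fin β → U) → ℂ) (h : (Fin γ → U) → ℂ)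

theorem shuffleMul_eq (u : Fin (α + β) → U) :
    shuffleMul lam f g u = 1 / ((α.factorial : ℂ) * β.factorial) *
      ∑ σ : Perm (Fin (α + β)),
        shuffleSummand lam f g (u ∘ σ ∘ Fin.castAdd β) (u ∘ σ ∘ Fin.natAdd α) :=
  rfl

theorem shuffleSummand_shuffleMul_left (v : Fin (α + β + γ) → U) :
    shuffleSummand lam (shuffleMul lam f g) h (v ∘ Fin.castAdd γ) (v ∘ Fin.natAdd (α + β)) =
      1 / ((α.factorial : ℂ) * β.factorial) * ∑ τ : Perm (Fin (α + β)),
        shuffleSummand₃ lam f g h (v ∘ Fin.castAddPerm γ τ ∘ Fin.castAdd γ ∘ Fin.castAdd β)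
          (v ∘ Fin.castAddPerm γ τ ∘ Fin.castAdd γ ∘ Fin.natAdd α)
          (v ∘ Fin.castAddPerm γ τ ∘ Fin.natAdd (α + β)) := by
  rw [shuffleSummand, shuffleMul_eq, mul_assoc, mul_assoc, sum_mul]
  congr 1
  refine sum_congr rfl fun τ _ => ?_
  rw [← crossProd_comp_perm_left lam (v ∘ Fin.castAdd γ) (v ∘ Fin.natAdd (α + β)) τ,
    crossProd_split_left]
  simp only [shuffleSummand, shuffleSummand₃, Function.comp_def, Fin.castAddPerm_castAdd,
    Fin.castAddPerm_natAdd]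
  ring

theorem shuffleMul_shuffleMul_left (u : Fin (α + β + γ) → U) :
    shuffleMul lam (shuffleMul lam f g) h u =
      1 / ((α.factorial : ℂ) * β.factorial * γ.factorial) * ∑ ρ : Perm (Fin (α + β + γ)),
        shuffleSummand₃ lam f g h (u ∘ ρ ∘ Fin.castAdd γ ∘ Fin.castAdd β)
          (u ∘ ρ ∘ Fin.castAdd γ ∘ Fin.natAdd α) (u ∘ ρ ∘ Fin.natAdd (α + β)) := by
  set F : Perm (Fin (α + β + γ)) → ℂ := fun ρ =>
    shuffleSummand₃ lam f g h (u ∘ ρ ∘ Fin.castAdd γ ∘ Fin.castAdd β)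
      (u ∘ ρ ∘ Fin.castAdd γ ∘ Fin.natAdd α) (u ∘ ρ ∘ Fin.natAdd (α + β))
  calc shuffleMul lam (shuffleMul lam f g) h u
      = 1 / (((α + β).factorial : ℂ) * γ.factorial) * ∑ σ : Perm (Fin (α + β + γ)),
          (1 / ((α.factorial : ℂ) * β.factorial) *
            ∑ τ : Perm (Fin (α + β)), F (σ * Fin.castAddPerm γ τ)) := by
        simp only [shuffleMul_eq lam (shuffleMul lam f g), ← Function.comp_assoc,
          shuffleSummand_shuffleMul_left]
        rfl
    _ = 1 / (((α + β).factorial : ℂ) * γ.factorial) * (1 / ((α.factorial : ℂ) * β.factorial)) *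
          ((α + β).factorial • ∑ ρ, F ρ) := by
        rw [← mul_sum, sum_sum_mul_right_eq_card_smul, Fintype.card_perm, Fintype.card_fin,
          mul_assoc]
    _ = _ := by
        have : ((α + β).factorial : ℂ) ≠ 0 := Nat.cast_ne_zero.mpr (Nat.factorial_ne_zero _)
        rw [nsmul_eq_mul]
        field_simp

theorem shuffleSummand_shuffleMul_right (v : Fin (α + (β + γ)) → U) :
    shuffleSummand lam f (shuffleMul lam g h) (v ∘ Fin.castAdd (β + γ)) (v ∘ Fin.natAdd α) =
      1 / ((β.factorial : ℂ) * γ.factorial) * ∑ τ : Perm (Fin (β + γ)),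
        shuffleSummand₃ lam f g h (v ∘ Fin.natAddPerm α τ ∘ Fin.castAdd (β + γ))
          (v ∘ Fin.natAddPerm α τ ∘ Fin.natAdd α ∘ Fin.castAdd γ)
          (v ∘ Fin.natAddPerm α τ ∘ Fin.natAdd α ∘ Fin.natAdd β) := by
  simp only [shuffleSummand, shuffleMul_eq lam g h, mul_sum, sum_mul]
  refine sum_congr rfl fun τ _ => ?_
  rw [← crossProd_comp_perm_right lam (v ∘ Fin.castAdd (β + γ)) (v ∘ Fin.natAdd α) τ,
    crossProd_split_right]
  simp only [shuffleSummand₃, Function.comp_def, Fin.natAddPerm_castAdd, Fin.natAddPerm_natAdd]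
  ring

theorem shuffleMul_shuffleMul_right (u : Fin (α + (β + γ)) → U) :
    shuffleMul lam f (shuffleMul lam g h) u =
      1 / ((α.factorial : ℂ) * β.factorial * γ.factorial) * ∑ ρ : Perm (Fin (α + (β + γ))),
        shuffleSummand₃ lam f g h (u ∘ ρ ∘ Fin.castAdd (β + γ))
          (u ∘ ρ ∘ Fin.natAdd α ∘ Fin.castAdd γ) (u ∘ ρ ∘ Fin.natAdd α ∘ Fin.natAdd β) := by
  set F : Perm (Fin (α + (β + γ))) → ℂ := fun ρ =>
    shuffleSummand₃ lam f g h (u ∘ ρ ∘ Fin.castAdd (β + γ))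
      (u ∘ ρ ∘ Fin.natAdd α ∘ Fin.castAdd γ) (u ∘ ρ ∘ Fin.natAdd α ∘ Fin.natAdd β)
  calc shuffleMul lam f (shuffleMul lam g h) u
      = 1 / ((α.factorial : ℂ) * (β + γ).factorial) * ∑ σ : Perm (Fin (α + (β + γ))),
          (1 / ((β.factorial : ℂ) * γ.factorial) *
            ∑ τ : Perm (Fin (β + γ)), F (σ * Fin.natAddPerm α τ)) := by
        simp only [shuffleMul_eq lam f (shuffleMul lam g h), ← Function.comp_assoc,
          shuffleSummand_shuffleMul_right]
        rfl
    _ = 1 / ((α.factorial : ℂ) * (β + γ).factorial) * (1 / ((β.factorial : ℂ) * γ.factorial)) *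
          ((β + γ).factorial • ∑ ρ, F ρ) := by
        rw [← mul_sum, sum_sum_mul_right_eq_card_smul, Fintype.card_perm, Fintype.card_fin,
          mul_assoc]
    _ = _ := by
        have : ((β + γ).factorial : ℂ) ≠ 0 := Nat.cast_ne_zero.mpr (Nat.factorial_ne_zero _)
        rw [nsmul_eq_mul]
        field_simp

end ShuffleMul

/-- For any weight function `λ(x,y)`, the shuffle product on symmetric
functions is associative. -/
theorem shuffleMul_assoc {U : Type*} (lam : U → U → ℂ) {α β γ : ℕ}
    (f : (Fin α → U) → ℂ) (g : (Fin β → U) → ℂ) (h : (Fin γ → U) → ℂ) :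
    ∀ u : Fin (α + β + γ) → U,
      shuffleMul lam (shuffleMul lam f g) h u =
        shuffleMul lam f (shuffleMul lam g h)
          (fun i : Fin (α + (β + γ)) =>
            u (Fin.cast (by omega : α + (β + γ) = α + β + γ) i)) := by
  intro u
  rw [shuffleMul_shuffleMul_left, shuffleMul_shuffleMul_right]
  congr 1
  refine Fintype.sum_equiv (finCongr (add_assoc α β γ)).permCongr _ _ fun ρ => ?_
  -- the blocks agree up to `Fin.cast`; only the last one is not a definitional match
  simp only [Function.comp_def, Equiv.permCongr_apply, finCongr_apply, finCongr_symm,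
    Fin.natAdd_natAdd]
  rfl
end

section
/- Consider the quadratic Poisson bracket on ℂ[x_0, x_1, x_2] defined by {x_0, x_1} = x_2² + k·x_0·x_1, {x_1, x_2} = x_0² + k·x_1·x_2, {x_2, x_0} = x_1² + k·x_2·x_0 for a parameter k ∈ ℂ. Then this bracket satisfies the Jacobi identity, and the cubic C = x_0³ + x_1³ + x_2³ + 3k·x_0·x_1·x_2 is a Casimir element: {x_i, C} = 0 for i = 0, 1, 2. -/
open MvPolynomial

lemma pd_single {σ : Type*} [DecidableEq σ] (i a b : σ) :
    pderiv i ((Pi.single a 1 : σ → MvPolynomial σ ℂ) b) = 0 := by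
  rcases eq_or_ne b a with rfl | h <;> simp [Pi.single_eq_of_ne, *]

lemma pd_comm {σ : Type*} [DecidableEq σ] (i j : σ) (f : MvPolynomial σ ℂ) :
    pderiv i (pderiv j f) = pderiv j (pderiv i f) := by
  induction f using MvPolynomial.induction_on with
  | C a => simp
  | add f g hf hg => simp [hf, hg]
  | mul_X f n hf => simp [pderiv_mul, hf, pd_single]; ring

lemma pd_three {σ : Type*} (i : σ) : pderiv i (3 : MvPolynomial σ ℂ) = 0 := by
  rw [show (3 : MvPolynomial σ ℂ) = C 3 from (map_ofNat C 3).symm]; exact pderiv_C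

/-- The quadratic Poisson bracket on `ℂ[x₀,x₁,x₂]` with
`{x₀,x₁} = x₂² + k x₀x₁`, `{x₁,x₂} = x₀² + k x₁x₂`, `{x₂,x₀} = x₁² + k x₂x₀`,
extended to all polynomials by bilinearity and the Leibniz rule (i.e. as a
bivector field). -/
noncomputable def pbr (k : ℂ) (f g : MvPolynomial (Fin 3) ℂ) : MvPolynomial (Fin 3) ℂ :=
  (X 2 ^ 2 + C k * X 0 * X 1) * (pderiv 0 f * pderiv 1 g - pderiv 1 f * pderiv 0 g) +
  (X 0 ^ 2 + C k * X 1 * X 2) * (pderiv 1 f * pderiv 2 g - pderiv 2 f * pderiv 1 g) +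
  (X 1 ^ 2 + C k * X 2 * X 0) * (pderiv 2 f * pderiv 0 g - pderiv 0 f * pderiv 2 g)

set_option maxHeartbeats 2000000 in
/-- The bracket has the prescribed values on generators, satisfies the Jacobi
identity, and `C = x₀³ + x₁³ + x₂³ + 3k·x₀x₁x₂` is a Casimir element. -/
theorem pbr_jacobi_casimir (k : ℂ) :
    (pbr k (X 0) (X 1) = X 2 ^ 2 + C k * X 0 * X 1) ∧
    (pbr k (X 1) (X 2) = X 0 ^ 2 + C k * X 1 * X 2) ∧
    (pbr k (X 2) (X 0) = X 1 ^ 2 + C k * X 2 * X 0) ∧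
    (∀ f g h : MvPolynomial (Fin 3) ℂ,
      pbr k f (pbr k g h) + pbr k h (pbr k f g) + pbr k g (pbr k h f) = 0) ∧
    (∀ i : Fin 3,
      pbr k (X i) (X 0 ^ 3 + X 1 ^ 3 + X 2 ^ 3 + C (3 * k) * (X 0 * X 1 * X 2)) = 0) := by
  refine ⟨?_, ?_, ?_, ?_, ?_⟩
  · simp [pbr, pderiv_X, Pi.single_apply]
  · simp [pbr, pderiv_X, Pi.single_apply]
  · simp [pbr, pderiv_X, Pi.single_apply]
  · intro f g h
    simp only [pbr, map_add, map_sub, map_mul, pderiv_mul, pderiv_pow, pderiv_C,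
      pderiv_X_self,
      pderiv_X_of_ne (show (1:Fin 3) ≠ 0 by decide), pderiv_X_of_ne (show (2:Fin 3) ≠ 0 by decide),
      pderiv_X_of_ne (show (0:Fin 3) ≠ 1 by decide), pderiv_X_of_ne (show (2:Fin 3) ≠ 1 by decide),
      pderiv_X_of_ne (show (0:Fin 3) ≠ 2 by decide), pderiv_X_of_ne (show (1:Fin 3) ≠ 2 by decide)]
    simp only [pd_comm 1 0 f, pd_comm 2 0 f, pd_comm 2 1 f,
      pd_comm 1 0 g, pd_comm 2 0 g, pd_comm 2 1 g,
      pd_comm 1 0 h, pd_comm 2 0 h, pd_comm 2 1 h]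
    ring
  · intro i
    fin_cases i <;>
    · simp [pbr, pderiv_X, Pi.single_apply, pderiv_mul, pderiv_pow, map_ofNat, pd_three]
      ring
end

section
/- Let ψ: ℂ³ → ℂ be an entire function satisfying ψ(η+1, u, v) = ψ(η, u+1, v) = ψ(η, u, v+1) = ψ(η, u, v), ψ(η+τ, u, v) = e^{-2πin(v-u)} ψ(η, u, v), ψ(η, u+τ, v) = e^{2πinη} ψ(η, u, v), and ψ(η, u, v+τ) = e^{-2πinη} ψ(η, u, v), where Im τ > 0 and n is a positive integer. Then ψ is identically zero. -/
open Complex Function Set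
open scoped Real

/-!
For fixed `η` and `v`, the slice `g u = ψ (η, u, v)` is an entire function with
`g (u + 1) = g u` and `g (u + τ) = μ g u`, `μ = e^{2πinη}`. Such a `g` is a single Fourier mode
`c e^{2πiku}`: if `g u₀ ≠ 0`, then `g u · g (2u₀ - u)` is doubly periodic, hence constant by
Liouville, so `g` has no zeros; then `g'/g` is doubly periodic, hence constant. Comparing with
`g (u + τ) = μ g u` forces `g = 0` unless `μ = e^{2πikτ}` for some `k ∈ ℤ`. The exceptional `η`
form the countable set `(ℤτ + ℤ)/n`, so `ψ` vanishes on a dense set of slices.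
-/

theorem Complex.linearIndependent_one_of_im_ne_zero {τ : ℂ} (hτ : τ.im ≠ 0) :
    LinearIndependent ℝ ![1, τ] := by
  refine LinearIndependent.pair_iff.2 fun s t hst => ?_
  have him : t * τ.im = 0 := by simpa using congrArg Complex.im hst
  have ht : t = 0 := by simpa [hτ] using him
  subst ht
  simpa using hst

theorem Differentiable.apply_eq_apply_of_periodic {E : Type*} [NormedAddCommGroup E]
    [NormedSpace ℂ E] {f : ℂ → E} (hf : Differentiable ℂ f) (L : PeriodPair)
    (h₁ : Periodic f L.ω₁) (h₂ : Periodic f L.ω₂) (z w : ℂ) : f z = f w := by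
  refine hf.apply_eq_apply_of_bounded
    (IsZLattice.isCompact_range_of_periodic L.lattice f hf.continuous ?_).isBounded z w
  intro x w hw
  obtain ⟨m, n, rfl⟩ := PeriodPair.mem_lattice.1 hw
  exact (h₁.int_mul m).add_period (h₂.int_mul n) x

theorem logDeriv_periodic_of_apply_add_eq_mul {𝕜 : Type*} [NontriviallyNormedField 𝕜]
    {f : 𝕜 → 𝕜} {c μ : 𝕜} (hμ : μ ≠ 0) (h : ∀ x, f (x + c) = μ * f x) :
    Periodic (logDeriv f) c := by
  intro x
  have hshift : (fun y => f (y + c)) = fun y => μ * f y := funext h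
  rw [logDeriv_apply, logDeriv_apply, ← deriv_comp_add_const, hshift, h, deriv_const_mul_field,
    mul_div_mul_left _ _ hμ]

section QuasiPeriodic

variable {τ μ : ℂ} {g : ℂ → ℂ}

theorem ne_zero_of_quasiPeriodic (hτ : τ.im ≠ 0) (hg : Differentiable ℂ g)
    (h₁ : Periodic g 1) (hμ : ∀ u, g (u + τ) = μ * g u) {u₀ : ℂ} (hu₀ : g u₀ ≠ 0) (u : ℂ) :
    g u ≠ 0 := by
  set P : ℂ → ℂ := fun u => g u * g (2 * u₀ - u)
  have hP₁ : Periodic P 1 := fun u => by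
    simp only [P, h₁ u, ← h₁ (2 * u₀ - (u + 1))]
    ring_nf
  have hP₂ : Periodic P τ := fun u => by
    simp only [P, hμ u, show 2 * u₀ - u = 2 * u₀ - (u + τ) + τ by ring, hμ (2 * u₀ - (u + τ))]
    ring
  have hP : P u = P u₀ := (hg.mul (hg.comp (by fun_prop))).apply_eq_apply_of_periodic
    ⟨1, τ, linearIndependent_one_of_im_ne_zero hτ⟩ hP₁ hP₂ u u₀
  intro hu
  simp [P, hu, show 2 * u₀ - u₀ = u₀ by ring, hu₀] at hP

theorem exists_eq_mul_exp_of_quasiPeriodic (hτ : τ.im ≠ 0) (hg : Differentiable ℂ g)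
    (h₁ : Periodic g 1) (hμ : ∀ u, g (u + τ) = μ * g u) :
    ∃ (c : ℂ) (k : ℤ), ∀ u, g u = c * exp (2 * π * I * k * u) := by
  by_cases hzero : ∀ u, g u = 0
  · exact ⟨0, 0, by simpa using hzero⟩
  push Not at hzero
  obtain ⟨u₀, hu₀⟩ := hzero
  have hne := ne_zero_of_quasiPeriodic hτ hg h₁ hμ hu₀
  have hμ0 : μ ≠ 0 := fun h => hne (u₀ + τ) (by simp [hμ, h])
  have hlog : Differentiable ℂ (logDeriv g) := fun x =>
    ((hg.analyticAt x).deriv.differentiableAt).div (hg x) (hne x)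
  set a := logDeriv g 0
  have hconst : ∀ u, logDeriv g u = a := fun u => hlog.apply_eq_apply_of_periodic
    ⟨1, τ, linearIndependent_one_of_im_ne_zero hτ⟩
    (logDeriv_periodic_of_apply_add_eq_mul one_ne_zero (by simpa using h₁))
    (logDeriv_periodic_of_apply_add_eq_mul hμ0 hμ) u 0
  have hexp_log : ∀ u, logDeriv (fun u => exp (a * u)) u = a := fun u => by
    have hd : HasDerivAt (fun u => exp (a * u)) (exp (a * u) * a) u := by
      simpa using ((hasDerivAt_id u).const_mul a).cexp
    rw [logDeriv_apply, hd.deriv, mul_div_cancel_left₀ _ (exp_ne_zero _)]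
  obtain ⟨c, hc0, hc⟩ := (logDeriv_eqOn_iff (g := fun u => exp (a * u)) hg.differentiableOn
    (by fun_prop) isOpen_univ isPreconnected_univ (fun u _ => exp_ne_zero _)
    (fun u _ => hne u)).1 (fun u _ => by rw [hconst, hexp_log])
  have hgexp : ∀ u, g u = c * exp (a * u) := fun u => hc (mem_univ u)
  have hexp_a : exp a = 1 := by
    have h := h₁ 0
    rw [hgexp, hgexp] at h
    simpa [hc0] using h
  obtain ⟨k, hk⟩ := exp_eq_one_iff.1 hexp_a
  exact ⟨c, k, fun u => by rw [hgexp, hk]; ring_nf⟩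

theorem eq_zero_of_quasiPeriodic (hτ : τ.im ≠ 0) (hg : Differentiable ℂ g)
    (h₁ : Periodic g 1) (hμ : ∀ u, g (u + τ) = μ * g u)
    (hμk : ∀ k : ℤ, μ ≠ exp (2 * π * I * k * τ)) (u : ℂ) : g u = 0 := by
  obtain ⟨c, k, hc⟩ := exists_eq_mul_exp_of_quasiPeriodic hτ hg h₁ hμ
  have hτc : c * exp (2 * π * I * k * τ) = μ * c := by simpa [hc] using hμ 0
  obtain rfl : c = 0 := by
    by_contra hc0
    exact hμk k (mul_right_cancel₀ hc0 (hτc.symm.trans (mul_comm _ _)))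
  simp [hc]

end QuasiPeriodic

theorem dense_setOf_forall_exp_ne {c : ℂ} (hc : c ≠ 0) (τ : ℂ) :
    Dense {η : ℂ | ∀ k : ℤ, exp (2 * π * I * c * η) ≠ exp (2 * π * I * k * τ)} := by
  refine ((countable_range fun p : ℤ × ℤ => (p.1 * τ + p.2) / c).dense_compl ℝ).mono ?_
  intro η hη k hk
  obtain ⟨m, hm⟩ := exp_eq_exp_iff_exists_int.1 hk
  refine hη ⟨(k, m), ?_⟩
  have h2πI : 2 * π * I ≠ 0 := by simp [Real.pi_ne_zero]
  have hcη : c * η = k * τ + m := mul_left_cancel₀ h2πI (by linear_combination hm)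
  simp only [← hcη, mul_div_cancel_left₀ _ hc]

theorem quasi_periodic_entire_eq_zero_general (τ : ℂ) (hτ : 0 < τ.im) (n : ℕ) (hn : 0 < n)
    (ψ : ℂ × ℂ × ℂ → ℂ) (hψ : Differentiable ℂ ψ)
    (h2 : ∀ η u v : ℂ, ψ (η, u + 1, v) = ψ (η, u, v))
    (h5 : ∀ η u v : ℂ, ψ (η, u + τ, v) =
      Complex.exp (2 * ↑Real.pi * I * (n : ℂ) * η) * ψ (η, u, v)) :
    ψ = 0 := by
  funext ⟨η, u, v⟩
  show ψ (η, u, v) = 0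
  have hcont : Continuous fun η => ψ (η, u, v) := hψ.continuous.comp (by fun_prop)
  refine congrFun (hcont.ext_on (dense_setOf_forall_exp_ne (Nat.cast_ne_zero.2 hn.ne') τ)
    continuous_const fun η hη => ?_) η
  exact eq_zero_of_quasiPeriodic (g := fun u => ψ (η, u, v)) hτ.ne' (hψ.comp (by fun_prop))
    (fun u => h2 η u v) (fun u => h5 η u v) hη u

/-- An entire function `ψ(η,u,v)` on `ℂ³` that is periodic with period 1 in
each variable and satisfies the quasi-periodicity relations
`ψ(η+τ,u,v) = e^{-2πin(v-u)} ψ(η,u,v)`, `ψ(η,u+τ,v) = e^{2πinη} ψ(η,u,v)`,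
`ψ(η,u,v+τ) = e^{-2πinη} ψ(η,u,v)` (with `Im τ > 0`, `n ≥ 1`) vanishes
identically. -/
theorem quasi_periodic_entire_eq_zero (τ : ℂ) (hτ : 0 < τ.im) (n : ℕ) (hn : 0 < n)
    (ψ : ℂ × ℂ × ℂ → ℂ) (hψ : Differentiable ℂ ψ)
    (h1 : ∀ η u v : ℂ, ψ (η + 1, u, v) = ψ (η, u, v))
    (h2 : ∀ η u v : ℂ, ψ (η, u + 1, v) = ψ (η, u, v))
    (h3 : ∀ η u v : ℂ, ψ (η, u, v + 1) = ψ (η, u, v))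
    (h4 : ∀ η u v : ℂ, ψ (η + τ, u, v) =
      Complex.exp (-(2 * ↑Real.pi * I) * (n : ℂ) * (v - u)) * ψ (η, u, v))
    (h5 : ∀ η u v : ℂ, ψ (η, u + τ, v) =
      Complex.exp (2 * ↑Real.pi * I * (n : ℂ) * η) * ψ (η, u, v))
    (h6 : ∀ η u v : ℂ, ψ (η, u, v + τ) =
      Complex.exp (-(2 * ↑Real.pi * I) * (n : ℂ) * η) * ψ (η, u, v)) :
    ψ = 0 :=
  quasi_periodic_entire_eq_zero_general τ hτ n hn ψ hψ h2 h5
end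

section
/- Let q ≥ 3 and let m_1, ..., m_q be positive integers. Consider the system of equations in variables e_{α_1,...,α_q} (indices 1 ≤ α_t ≤ m_t) given by e_{μ_1,...,μ_ψ,α_1,...,α_φ,γ_1,...,γ_p} · e_{μ_1',...,μ_{ψ-1}',μ_ψ,β_1,...,β_φ,γ_1,γ_2',...,γ_p'} = e_{μ_1,...,μ_ψ,β_1,...,β_φ,γ_1,...,γ_p} · e_{μ_1',...,μ_{ψ-1}',μ_ψ,α_1,...,α_φ,γ_1,γ_2',...,γ_p'} (for all admissible index patterns with α_i ≠ β_i). Then every solution in nonzero complex numbers is of the factored form e_{α_1,...,α_q} = e^{(1)}_{α_1,α_2} · e^{(2)}_{α_2,α_3} ⋯ e^{(q-1)}_{α_{q-1},α_q} for some arrays of nonzero numbers e^{(t)}_{α,β}, and conversely every such product is a solution. -/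
variable {N : ℕ} {m : Fin (N + 1) → ℕ}

/-- Swap the block of coordinates with (0-indexed) positions in `[ψ, ψ+φ)` of
`x` by those of `y`. -/
def blockSwap (m : Fin (N + 1) → ℕ) (x y : ∀ t, Fin (m t)) (ψ φ : ℕ) :
    ∀ t, Fin (m t) :=
  fun t => if ψ ≤ t.val ∧ t.val < ψ + φ then y t else x t

/-- The system of equations (the `η = 0` limit of the exchange relations):
for every admissible pattern — two index tuples agreeing at the position just
before the middle block and at the position just after it, and differing at
every position of the middle block — the product `e_x e_y` is unchanged when
the middle blocks of `x` and `y` are exchanged. -/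
def IsExchangeSol (m : Fin (N + 1) → ℕ) (e : (∀ t, Fin (m t)) → ℂ) : Prop :=
  ∀ (x y : ∀ t, Fin (m t)) (ψ φ : ℕ), 1 ≤ φ → ψ + φ ≤ N + 1 →
    (∀ t : Fin (N + 1), t.val + 1 = ψ → x t = y t) →
    (∀ t : Fin (N + 1), t.val = ψ + φ → x t = y t) →
    (∀ t : Fin (N + 1), ψ ≤ t.val → t.val < ψ + φ → x t ≠ y t) →
    e x * e y = e (blockSwap m x y ψ φ) * e (blockSwap m y x ψ φ)

/-- Auxiliary: swap the whole tail `[k, N]` of coordinates of `x` by that of `y`. -/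
def exchTswap (m : Fin (N + 1) → ℕ) (x y : ∀ t, Fin (m t)) (k : ℕ) :
    ∀ t, Fin (m t) :=
  fun t => if k ≤ t.val then y t else x t

/-- Auxiliary: the base point `c` with coordinate `t+1` replaced by `b`. -/
def exchW (m : Fin (N + 1) → ℕ) (c : ∀ t, Fin (m t)) (t : Fin N)
    (b : Fin (m t.succ)) : ∀ s, Fin (m s) :=
  Function.update c t.succ b

/-- Auxiliary: the base point `c` with coordinates `t, t+1` replaced by `a, b`. -/
def exchP (m : Fin (N + 1) → ℕ) (c : ∀ t, Fin (m t)) (t : Fin N)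
    (a : Fin (m t.castSucc)) (b : Fin (m t.succ)) : ∀ s, Fin (m s) :=
  Function.update (Function.update c t.succ b) t.castSucc a

lemma exchTswap_eq_blockSwap (x y : ∀ t, Fin (m t)) (k : ℕ) (hk : k ≤ N + 1) :
    exchTswap m x y k = blockSwap m x y k (N + 1 - k) := by
  funext t
  have := t.isLt
  simp only [exchTswap, blockSwap]
  by_cases h : k ≤ t.val
  · rw [if_pos h, if_pos ⟨h, by omega⟩]
  · rw [if_neg h, if_neg (by omega)]

/-- The gluing lemma: the exchange relations imply that tails may be swapped
whenever the coordinates just before the tail agree. -/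
lemma exch_glue (e : (∀ t, Fin (m t)) → ℂ) (hsol : IsExchangeSol m e) :
    ∀ d k, N + 1 ≤ k + d → 1 ≤ k →
    ∀ x y : ∀ t, Fin (m t), (∀ t : Fin (N + 1), t.val + 1 = k → x t = y t) →
    e x * e y = e (exchTswap m x y k) * e (exchTswap m y x k) := by
  intro d
  induction d with
  | zero =>
    intro k hk _ x y _
    have hx : exchTswap m x y k = x := by
      funext t; have := t.isLt; simp only [exchTswap]; rw [if_neg (by omega)]
    have hy : exchTswap m y x k = y := by
      funext t; have := t.isLt; simp only [exchTswap]; rw [if_neg (by omega)]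
    rw [hx, hy]
  | succ d ih =>
    intro k hk hk1 x y hagree
    by_cases hkN : N + 1 ≤ k
    · have hx : exchTswap m x y k = x := by
        funext t; have := t.isLt; simp only [exchTswap]; rw [if_neg (by omega)]
      have hy : exchTswap m y x k = y := by
        funext t; have := t.isLt; simp only [exchTswap]; rw [if_neg (by omega)]
      rw [hx, hy]
    set s : Finset (Fin (N + 1)) :=
      Finset.univ.filter (fun j : Fin (N + 1) => k ≤ j.val ∧ x j = y j) with hs_def
    by_cases hs : s.Nonempty
    · set j := s.min' hs with hj_def
      have hjmem : j ∈ s := s.min'_mem hs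
      have hjk : k ≤ j.val := (Finset.mem_filter.mp hjmem).2.1
      have hjxy : x j = y j := (Finset.mem_filter.mp hjmem).2.2
      have hjmin : ∀ t : Fin (N + 1), k ≤ t.val → t.val < j.val → x t ≠ y t := by
        intro t htk htj hxy
        have hmem : t ∈ s := Finset.mem_filter.mpr ⟨Finset.mem_univ _, htk, hxy⟩
        have h1 : j.val ≤ t.val := s.min'_le t hmem
        omega
      rcases eq_or_lt_of_le hjk with hcase | hcase
      · -- j.val = k : reduce to k + 1
        have e1 : exchTswap m x y k = exchTswap m x y (k + 1) := by
          funext t; simp only [exchTswap]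
          by_cases h1 : k + 1 ≤ t.val
          · rw [if_pos (by omega), if_pos h1]
          · by_cases h2 : k ≤ t.val
            · rw [if_pos h2, if_neg h1]
              have ht : t = j := Fin.ext (by omega)
              rw [ht, hjxy]
            · rw [if_neg h2, if_neg h1]
        have e2 : exchTswap m y x k = exchTswap m y x (k + 1) := by
          funext t; simp only [exchTswap]
          by_cases h1 : k + 1 ≤ t.val
          · rw [if_pos (by omega), if_pos h1]
          · by_cases h2 : k ≤ t.val
            · rw [if_pos h2, if_neg h1]
              have ht : t = j := Fin.ext (by omega)
              rw [ht, hjxy]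
            · rw [if_neg h2, if_neg h1]
        rw [e1, e2]
        exact ih (k + 1) (by omega) (by omega) x y
          (fun t ht => by
            have : t = j := Fin.ext (by omega)
            rw [this, hjxy])
      · -- k < j.val
        have hjN := j.isLt
        have step1 := hsol x y k (j.val - k) (by omega) (by omega)
          hagree
          (fun t ht => by
            have : t = j := Fin.ext (by omega)
            rw [this, hjxy])
          (fun t ht1 ht2 => hjmin t ht1 (by omega))
        have step2 := ih (j.val + 1) (by omega) (by omega)
          (blockSwap m x y k (j.val - k)) (blockSwap m y x k (j.val - k))
          (fun t ht => by
            have htj : t = j := Fin.ext (by omega)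
            subst htj
            simp only [blockSwap]
            rw [if_neg (by omega), if_neg (by omega), hjxy])
        have e3 : exchTswap m (blockSwap m x y k (j.val - k))
            (blockSwap m y x k (j.val - k)) (j.val + 1) = exchTswap m x y k := by
          funext t; simp only [exchTswap, blockSwap]
          rcases lt_trichotomy t.val j.val with h1 | h1 | h1
          · rw [if_neg (by omega)]
            by_cases h2 : k ≤ t.val
            · rw [if_pos (by omega), if_pos h2]
            · rw [if_neg (by omega), if_neg h2]
          · have ht : t = j := Fin.ext h1
            rw [if_neg (by omega), if_neg (by omega), if_pos (by omega), ht, hjxy]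
          · rw [if_pos (by omega), if_neg (by omega), if_pos (by omega)]
        have e4 : exchTswap m (blockSwap m y x k (j.val - k))
            (blockSwap m x y k (j.val - k)) (j.val + 1) = exchTswap m y x k := by
          funext t; simp only [exchTswap, blockSwap]
          rcases lt_trichotomy t.val j.val with h1 | h1 | h1
          · rw [if_neg (by omega)]
            by_cases h2 : k ≤ t.val
            · rw [if_pos (by omega), if_pos h2]
            · rw [if_neg (by omega), if_neg h2]
          · have ht : t = j := Fin.ext h1
            rw [if_neg (by omega), if_neg (by omega), if_pos (by omega), ht, hjxy]
          · rw [if_pos (by omega), if_neg (by omega), if_pos (by omega)]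
        rw [step1, step2, e3, e4]
    · -- no agreement in the tail: direct exchange
      have key := hsol x y k (N + 1 - k) (by omega) (by omega) hagree
        (fun t ht => absurd t.isLt (by omega))
        (fun t ht1 _ hxy => hs ⟨t, Finset.mem_filter.mpr ⟨Finset.mem_univ _, ht1, hxy⟩⟩)
      rw [exchTswap_eq_blockSwap x y k (by omega), exchTswap_eq_blockSwap y x k (by omega)]
      exact key

lemma exch_key_eq1 (c x : ∀ t, Fin (m t)) (t : Fin N) :
    exchTswap m (exchTswap m c x t.val) (exchW m c t (x t.succ)) (t.val + 2)
      = exchP m c t (x t.castSucc) (x t.succ) := by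
  funext s
  simp only [exchTswap, exchP, exchW]
  rcases lt_trichotomy s.val t.val with h1 | h1 | h1
  · have hne1 : s ≠ t.castSucc := by
      simp only [ne_eq, Fin.ext_iff, Fin.coe_castSucc]; omega
    have hne2 : s ≠ t.succ := by
      simp only [ne_eq, Fin.ext_iff, Fin.val_succ]; omega
    rw [if_neg (by omega), if_neg (by omega), Function.update_of_ne hne1,
      Function.update_of_ne hne2]
  · have hsc : s = t.castSucc := by
      simp only [Fin.ext_iff, Fin.coe_castSucc]; omega
    subst hsc
    simp only [Fin.coe_castSucc]
    rw [if_neg (by omega), if_pos (by omega), Function.update_self]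
  · rcases Nat.lt_or_ge s.val (t.val + 2) with h2 | h2
    · have hss : s = t.succ := by
        simp only [Fin.ext_iff, Fin.val_succ]; omega
      subst hss
      have hne1 : t.succ ≠ t.castSucc := by
        simp only [ne_eq, Fin.ext_iff, Fin.coe_castSucc, Fin.val_succ]; omega
      simp only [Fin.val_succ]
      rw [if_neg (by omega), if_pos (by omega), Function.update_of_ne hne1,
        Function.update_self]
    · have hne1 : s ≠ t.castSucc := by
        simp only [ne_eq, Fin.ext_iff, Fin.coe_castSucc]; omega
      have hne2 : s ≠ t.succ := by
        simp only [ne_eq, Fin.ext_iff, Fin.val_succ]; omega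
      rw [if_pos (by omega), Function.update_of_ne hne2,
        Function.update_of_ne hne1, Function.update_of_ne hne2]

lemma exch_key_eq2 (c x : ∀ t, Fin (m t)) (t : Fin N) :
    exchTswap m (exchW m c t (x t.succ)) (exchTswap m c x t.val) (t.val + 2)
      = exchTswap m c x (t.val + 1) := by
  funext s
  simp only [exchTswap, exchW]
  rcases Nat.lt_or_ge s.val (t.val + 1) with h1 | h1
  · have hne2 : s ≠ t.succ := by
      simp only [ne_eq, Fin.ext_iff, Fin.val_succ]; omega
    rw [if_neg (by omega), if_neg (by omega), Function.update_of_ne hne2]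
  · rcases Nat.lt_or_ge s.val (t.val + 2) with h2 | h2
    · have hss : s = t.succ := by
        simp only [Fin.ext_iff, Fin.val_succ]; omega
      subst hss
      simp only [Fin.val_succ]
      rw [if_neg (by omega), if_pos (by omega), Function.update_self]
    · rw [if_pos (by omega), if_pos (by omega), if_pos (by omega)]

lemma exch_prod_ite_succ {M : Type*} [CommMonoid M] {n : ℕ} (j : ℕ) (hj : j < n)
    (F : Fin n → M) :
    (∏ t : Fin n, if j ≤ t.val then F t else 1)
      = F ⟨j, hj⟩ * ∏ t : Fin n, if j + 1 ≤ t.val then F t else 1 := by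
  rw [← Finset.mul_prod_erase Finset.univ (fun t : Fin n => if j ≤ t.val then F t else 1)
      (Finset.mem_univ (⟨j, hj⟩ : Fin n)),
    ← Finset.mul_prod_erase Finset.univ (fun t : Fin n => if j + 1 ≤ t.val then F t else 1)
      (Finset.mem_univ (⟨j, hj⟩ : Fin n))]
  simp only
  rw [if_pos (le_refl j), if_neg (by omega), one_mul]
  congr 1
  refine Finset.prod_congr rfl fun b hb => ?_
  have hb' : b ≠ ⟨j, hj⟩ := (Finset.mem_erase.mp hb).1
  have hbv : b.val ≠ j := fun h => hb' (Fin.ext h)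
  by_cases hc : j + 1 ≤ b.val
  · rw [if_pos hc, if_pos (by omega)]
  · rw [if_neg hc, if_neg (by omega)]

/-- For `q = N + 1 ≥ 3` coordinates, the nonzero solutions of the system are
exactly the chain products
`e_{α₁,…,α_q} = e⁽¹⁾_{α₁α₂} e⁽²⁾_{α₂α₃} ⋯ e⁽^{q-1}⁾_{α_{q-1}α_q}`. -/
theorem exchangeSol_iff_chain_product (N : ℕ) (hN : 2 ≤ N)
    (m : Fin (N + 1) → ℕ) (e : (∀ t, Fin (m t)) → ℂ) (he : ∀ x, e x ≠ 0) :
    IsExchangeSol m e ↔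
      ∃ f : (t : Fin N) → Fin (m t.castSucc) → Fin (m t.succ) → ℂ,
        (∀ t a b, f t a b ≠ 0) ∧
        ∀ x : ∀ t, Fin (m t), e x = ∏ t : Fin N, f t (x t.castSucc) (x t.succ) := by
  constructor
  · intro hsol
    by_cases hm : ∀ t, 0 < m t
    · have c : ∀ t, Fin (m t) := fun t => ⟨0, hm t⟩
      refine ⟨fun t a b => if t.val + 1 = N then e (exchP m c t a b)
        else e (exchP m c t a b) / e (exchW m c t b), ?_, ?_⟩
      · intro t a b
        dsimp only
        split
        · exact he _
        · exact div_ne_zero (he _) (he _)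
      · intro x
        have key : ∀ t : Fin N,
            e (exchTswap m c x t.val) * e (exchW m c t (x t.succ))
              = e (exchP m c t (x t.castSucc) (x t.succ))
                * e (exchTswap m c x (t.val + 1)) := by
          intro t
          have hb := t.isLt
          have h := exch_glue e hsol N (t.val + 2) (by omega) (by omega)
            (exchTswap m c x t.val) (exchW m c t (x t.succ))
            (fun s hsv => by
              have hss : s = t.succ := by
                simp only [Fin.ext_iff, Fin.val_succ]; omega
              subst hss
              simp only [exchTswap, exchW, Fin.val_succ]
              rw [if_pos (by omega), Function.update_self])
          rw [exch_key_eq1, exch_key_eq2] at h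
          exact h
        have tele : ∀ d j, j + d + 1 = N →
            e (exchTswap m c x j) = ∏ t : Fin N,
              (if j ≤ t.val then
                (if t.val + 1 = N then e (exchP m c t (x t.castSucc) (x t.succ))
                  else e (exchP m c t (x t.castSucc) (x t.succ))
                    / e (exchW m c t (x t.succ)))
              else 1) := by
          intro d
          induction d with
          | zero =>
            intro j hj
            have hjN : j < N := by omega
            set tN : Fin N := ⟨j, hjN⟩ with htN
            have hL : exchTswap m c x j
                = exchP m c tN (x tN.castSucc) (x tN.succ) := by
              funext s
              have hsN := s.isLt
              have hcv : (tN.castSucc : Fin (N + 1)).val = j := rfl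
              have hsv : (tN.succ : Fin (N + 1)).val = j + 1 := rfl
              simp only [exchTswap, exchP]
              rcases lt_trichotomy s.val j with h1 | h1 | h1
              · have hne1 : s ≠ tN.castSucc := by
                  simp only [ne_eq, Fin.ext_iff, hcv]; omega
                have hne2 : s ≠ tN.succ := by
                  simp only [ne_eq, Fin.ext_iff, hsv]; omega
                rw [if_neg (by omega), Function.update_of_ne hne1,
                  Function.update_of_ne hne2]
              · have hsc : s = tN.castSucc := by
                  simp only [Fin.ext_iff, hcv]; omega
                subst hsc
                rw [if_pos (by omega), Function.update_self]
              · have hss : s = tN.succ := by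
                  simp only [Fin.ext_iff, hsv]; omega
                subst hss
                have hne1 : tN.succ ≠ tN.castSucc := by
                  simp only [ne_eq, Fin.ext_iff, hcv, hsv]; omega
                rw [if_pos (by omega), Function.update_of_ne hne1,
                  Function.update_self]
            rw [hL]
            rw [Finset.prod_eq_single tN ?h1 ?h2]
            · rw [if_pos (show j ≤ j from le_refl j),
                if_pos (show j + 1 = N by omega)]
            case h1 =>
              intro b _ hb
              have hbv : b.val ≠ j := fun h => hb (Fin.ext h)
              have := b.isLt
              rw [if_neg (by omega)]
            case h2 =>
              intro h
              exact absurd (Finset.mem_univ tN) h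
          | succ d ih =>
            intro j hj
            have hjN : j < N := by omega
            have ihj := ih (j + 1) (by omega)
            rw [exch_prod_ite_succ j hjN]
            rw [← ihj]
            set tj : Fin N := ⟨j, hjN⟩ with htj
            have hfj : (if (tj : Fin N).val + 1 = N
                then e (exchP m c tj (x tj.castSucc) (x tj.succ))
                else e (exchP m c tj (x tj.castSucc) (x tj.succ))
                  / e (exchW m c tj (x tj.succ)))
              = e (exchP m c tj (x tj.castSucc) (x tj.succ))
                  / e (exchW m c tj (x tj.succ)) := by
              exact if_neg (by show ¬(j + 1 = N); omega)
            rw [hfj]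
            have hk := key tj
            have hw : e (exchW m c tj (x tj.succ)) ≠ 0 := he _
            rw [div_mul_eq_mul_div, eq_div_iff hw]
            have hjval : (tj : Fin N).val = j := rfl
            rw [hjval] at hk
            linear_combination hk
        have h0 := tele (N - 1) 0 (by omega)
        have hx0 : exchTswap m c x 0 = x := by
          funext s; exact if_pos (Nat.zero_le _)
        rw [hx0] at h0
        rw [h0]
        exact Finset.prod_congr rfl fun t _ => if_pos (Nat.zero_le _)
    · push_neg at hm
      obtain ⟨t0, ht0⟩ := hm
      refine ⟨fun _ _ _ => 1, fun _ _ _ => one_ne_zero, fun x => ?_⟩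
      exact absurd (x t0).isLt (by omega)
  · rintro ⟨f, hf, hprod⟩
    intro x y ψ φ hφ hψφ hleft hright _
    rw [hprod, hprod, hprod, hprod, ← Finset.prod_mul_distrib,
      ← Finset.prod_mul_distrib]
    refine Finset.prod_congr rfl fun t _ => ?_
    simp only [blockSwap, Fin.coe_castSucc, Fin.val_succ]
    by_cases h1 : ψ ≤ t.val ∧ t.val < ψ + φ
    · by_cases h2 : ψ ≤ t.val + 1 ∧ t.val + 1 < ψ + φ
      · rw [if_pos h1, if_pos h2, if_pos h1, if_pos h2]
        ring
      · -- t in block, t+1 just past the block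
        have hxy : x t.succ = y t.succ := hright t.succ (by
          simp only [Fin.val_succ]; omega)
        rw [if_pos h1, if_neg h2, if_pos h1, if_neg h2, hxy]
        ring
    · by_cases h2 : ψ ≤ t.val + 1 ∧ t.val + 1 < ψ + φ
      · -- t just before the block, t+1 in block
        have hxy : x t.castSucc = y t.castSucc := hleft t.castSucc (by
          simp only [Fin.coe_castSucc]; omega)
        rw [if_neg h1, if_pos h2, if_neg h1, if_pos h2, hxy]
        ring
      · rw [if_neg h1, if_neg h2, if_neg h1, if_neg h2]
end

section
/- Fix τ with Im τ > 0, n ∈ ℕ, c ∈ ℂ, and let Θ_{n,c}(Γ) be the space of entire functions f with f(z+1) = f(z) and f(z+τ) = (-1)ⁿ e^{-2πi(nz - c)} f(z). Then Θ_{n,c}(Γ) is an n-dimensional complex vector space. -/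
open Complex

/-- The space `Θ_{n,c}(Γ)` of entire functions with `f(z+1) = f(z)` and
`f(z+τ) = (-1)ⁿ e^{-2πi(nz-c)} f(z)`, as a subspace of `ℂ → ℂ`. -/
noncomputable def thetaSpace (τ c : ℂ) (n : ℕ) : Submodule ℂ (ℂ → ℂ) where
  carrier := {f | Differentiable ℂ f ∧ (∀ z, f (z + 1) = f z) ∧
    ∀ z, f (z + τ) =
      (-1 : ℂ) ^ n * Complex.exp (-(2 * ↑Real.pi * I) * ((n : ℂ) * z - c)) * f z}
  add_mem' := by
    rintro f g ⟨hf1, hf2, hf3⟩ ⟨hg1, hg2, hg3⟩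
    refine ⟨hf1.add hg1, fun z => ?_, fun z => ?_⟩
    · simp only [Pi.add_apply, hf2 z, hg2 z]
    · simp only [Pi.add_apply, hf3 z, hg3 z]; ring
  zero_mem' := by
    refine ⟨differentiable_const 0, fun z => rfl, fun z => ?_⟩
    simp
  smul_mem' := by
    rintro a f ⟨h1, h2, h3⟩
    refine ⟨h1.const_smul a, fun z => ?_, fun z => ?_⟩
    · simp only [Pi.smul_apply, h2 z]
    · simp only [Pi.smul_apply, h3 z, smul_eq_mul]; ring

/-!
Send `f` to its Fourier coefficients `a_m = ∫₀¹ e^{-2πimt} f(t) dt`. Since `e^{-2πimz} f(z)` is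
entire and `1`-periodic, Cauchy's theorem lets us move the segment `[0, 1]` to `[τ, τ + 1]`, and the
quasi-periodicity then gives `a_m = (-1)ⁿ e^{2πi(c - mτ)} a_{m+n}`. So `a_0, …, a_{n-1}` determine
every `a_m`, and an entire periodic function with vanishing Fourier coefficients vanishes on `ℝ`,
hence everywhere. Conversely `e^{2πijz} θ(nz + b_j, nτ)`, with `θ` the Jacobi theta function and a
suitable shift `b_j`, lies in `Θ_{n,c}(Γ)` and has Fourier series supported on `j + nℤ` with
coefficient `1` at `j`, so `f ↦ (a_0, …, a_{n-1})` is an isomorphism onto `ℂⁿ`.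
-/

open Real Function Set Filter Topology MeasureTheory

theorem Differentiable.intervalIntegral_comp_add_of_periodic {F : ℂ → ℂ}
    (hF : Differentiable ℂ F) {p : ℝ} (hper : Periodic F p) (z : ℂ) :
    ∫ t in (0 : ℝ)..p, F (t + z) = ∫ t in (0 : ℝ)..p, F t := by
  -- Cauchy on the rectangle with corners `0` and `p + i Im z`: its vertical sides cancel.
  have h_vertical : ∫ t in (0 : ℝ)..p, F (t + z.im * I) = ∫ t in (0 : ℝ)..p, F t := by
    have := Complex.integral_boundary_rect_eq_zero_of_differentiableOn F 0 (p + z.im * I)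
      hF.differentiableOn
    simp only [zero_re, zero_im, add_re, ofReal_re, mul_re, I_re, I_im, ofReal_im, add_im,
      mul_im, ofReal_zero, zero_mul, add_zero, mul_zero, sub_zero, mul_one, zero_add] at this
    have h_side (y : ℝ) : F (p + y * I) = F (y * I) := by rw [add_comm]; exact hper _
    simp only [h_side, add_sub_cancel_right] at this
    linear_combination -this
  have h_real : Periodic (fun t : ℝ ↦ F (t + z.im * I)) p := fun t ↦ by
    simpa [add_right_comm] using hper (t + z.im * I)
  calc ∫ t in (0 : ℝ)..p, F (t + z)
      = ∫ t in (0 : ℝ)..p, F ((t + z.re : ℝ) + z.im * I) := by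
        congr 1; ext t; push_cast; rw [add_assoc, re_add_im]
    _ = ∫ t in z.re..z.re + p, F (t + z.im * I) := by
        rw [intervalIntegral.integral_comp_add_right (fun t : ℝ ↦ F (t + z.im * I)), zero_add,
          add_comm]
    _ = ∫ t in (0 : ℝ)..p, F t := by
        rw [h_real.intervalIntegral_add_eq z.re 0, zero_add, h_vertical]

noncomputable def unitFourierCoeff (g : ℝ → ℂ) (m : ℤ) : ℂ :=
  ∫ t in (0 : ℝ)..1, cexp (-(2 * π * I * m * t)) * g t

theorem integral_exp_two_pi_I_int_mul (ℓ : ℤ) :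
    ∫ t in (0 : ℝ)..1, cexp (2 * π * I * ℓ * t) = if ℓ = 0 then 1 else 0 := by
  split_ifs with hℓ
  · simp [hℓ]
  · have hc : 2 * π * I * ℓ ≠ 0 := by simp [pi_ne_zero, hℓ]
    rw [integral_exp_mul_complex hc, ofReal_one, mul_one, mul_comm, exp_int_mul_two_pi_mul_I]
    simp

theorem unitFourierCoeff_add {g h : ℝ → ℂ} (hg : Continuous g) (hh : Continuous h) (m : ℤ) :
    unitFourierCoeff (g + h) m = unitFourierCoeff g m + unitFourierCoeff h m := by
  have he : Continuous fun t : ℝ ↦ cexp (-(2 * π * I * m * t)) := by fun_prop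
  simp only [unitFourierCoeff, Pi.add_apply, mul_add]
  exact intervalIntegral.integral_add ((he.mul hg).intervalIntegrable 0 1)
    ((he.mul hh).intervalIntegrable 0 1)

theorem unitFourierCoeff_smul (a : ℂ) (g : ℝ → ℂ) (m : ℤ) :
    unitFourierCoeff (a • g) m = a * unitFourierCoeff g m := by
  simp only [unitFourierCoeff, Pi.smul_apply, smul_eq_mul, mul_left_comm _ a,
    intervalIntegral.integral_const_mul]

theorem Function.Periodic.fourierCoeff_lift {g : ℝ → ℂ} (hper : Periodic g 1) (m : ℤ) :
    fourierCoeff hper.lift m = unitFourierCoeff g m := by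
  simp_rw [fourierCoeff_eq_intervalIntegral _ m 0, div_one, one_smul, zero_add, Periodic.lift_coe,
    fourier_coe_apply, smul_eq_mul, unitFourierCoeff]
  congr 1; ext t; congr 2; push_cast; ring

theorem Function.Periodic.eq_zero_of_unitFourierCoeff_eq_zero {g : ℝ → ℂ} (hg : Continuous g)
    (hper : Periodic g 1) (h : ∀ m, unitFourierCoeff g m = 0) : g = 0 := by
  let G : C(UnitAddCircle, ℂ) := ⟨hper.lift, continuous_coinduced_dom.mpr hg⟩
  have hG : fourierCoeff G = 0 := funext fun m ↦ (hper.fourierCoeff_lift m).trans (h m)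
  ext t
  have := has_pointwise_sum_fourier_series_of_summable (f := G) (hG ▸ summable_zero) t
  simp only [hG, Pi.zero_apply, zero_smul] at this
  exact this.unique hasSum_zero

theorem hasSum_unitFourierCoeff_of_hasSum {ι : Type*} [Countable ι] {c : ι → ℂ} {ℓ : ι → ℤ}
    {g : ℝ → ℂ} (hc : Summable (‖c ·‖))
    (hg : ∀ t : ℝ, HasSum (fun k ↦ c k * cexp (2 * π * I * ℓ k * t)) (g t)) (m : ℤ) :
    HasSum (fun k ↦ if ℓ k = m then c k else 0) (unitFourierCoeff g m) := by
  have h_term (k : ι) (t : ℝ) : cexp (-(2 * π * I * m * t)) * (c k * cexp (2 * π * I * ℓ k * t)) =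
      c k * cexp (2 * π * I * (ℓ k - m : ℤ) * t) := by
    rw [mul_left_comm, ← Complex.exp_add]; push_cast; ring_nf
  have h_integral (k : ι) :
      ∫ t in (0 : ℝ)..1, c k * cexp (2 * π * I * (ℓ k - m : ℤ) * t) =
        if ℓ k = m then c k else 0 := by
    rw [intervalIntegral.integral_const_mul, integral_exp_two_pi_I_int_mul]
    simp [sub_eq_zero]
  simp_rw [← h_integral, unitFourierCoeff]
  refine intervalIntegral.hasSum_integral_of_dominated_convergence (fun k _ ↦ ‖c k‖)
    (fun k ↦ by fun_prop) (fun k ↦ ae_of_all _ fun t _ ↦ ?_) (ae_of_all _ fun _ _ ↦ hc)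
    intervalIntegrable_const (ae_of_all _ fun t _ ↦ ?_)
  · rw [norm_mul, ← ofReal_intCast, show 2 * π * I * ((ℓ k - m : ℤ) : ℝ) * t =
      ((2 * π * (ℓ k - m : ℤ) * t : ℝ) : ℂ) * I by push_cast; ring, norm_exp_ofReal_mul_I, mul_one]
  · simpa only [h_term] using (hg t).mul_left (cexp (-(2 * π * I * m * t)))

theorem Differentiable.eq_zero_of_forall_ofReal {f : ℂ → ℂ} (hf : Differentiable ℂ f)
    (h : ∀ t : ℝ, f t = 0) : f = 0 := by
  have h_tendsto : Tendsto ofReal (𝓝[≠] 0) (𝓝[≠] 0) :=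
    continuous_ofReal.continuousWithinAt.tendsto_nhdsWithin fun t ht ↦ ofReal_ne_zero.mpr ht
  have h_freq : ∃ᶠ z in 𝓝[≠] (0 : ℂ), f z = 0 :=
    h_tendsto.frequently (Frequently.of_forall h)
  funext z
  exact (analyticOnNhd_univ_iff_differentiable.mpr hf)
    |>.eqOn_zero_of_preconnected_of_frequently_eq_zero isPreconnected_univ (mem_univ 0) h_freq
    (mem_univ z)

theorem Int.forall_of_forall_Ico_of_add_iff {P : ℤ → Prop} {n : ℤ} (hn : 0 < n)
    (hP : ∀ m, P (m + n) ↔ P m) (h : ∀ m, 0 ≤ m → m < n → P m) (m : ℤ) : P m := by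
  have hper : Periodic P n := fun m ↦ propext (hP m)
  rw [← hper.sub_int_mul_eq (m / n), Int.cast_id, mul_comm, ← Int.emod_def]
  exact h _ (Int.emod_nonneg m hn.ne') (Int.emod_lt_of_pos m hn)

section ThetaSpace

variable {τ c : ℂ} {n : ℕ} {f : ℂ → ℂ}

theorem unitFourierCoeff_eq_mul_of_mem_thetaSpace (hf : f ∈ thetaSpace τ c n) (m : ℤ) :
    unitFourierCoeff (fun t : ℝ ↦ f t) m =
      (-1) ^ n * cexp (2 * π * I * (c - m * τ)) * unitFourierCoeff (fun t : ℝ ↦ f t) (m + n) := by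
  obtain ⟨hf_diff, hf_one, hf_tau⟩ := hf
  set G : ℂ → ℂ := fun w ↦ cexp (-(2 * π * I * m * w)) * f w
  have hG_diff : Differentiable ℂ G := by fun_prop
  have hG_per : Periodic G 1 := fun w ↦ by
    have : -(2 * π * I * m * (w + 1)) = -(2 * π * I * m * w) + (-m : ℤ) * (2 * π * I) := by
      push_cast; ring
    simp only [G, this, Complex.exp_add, exp_int_mul_two_pi_mul_I, mul_one, hf_one]
  have h_shift (t : ℝ) : G (t + τ) = (-1) ^ n * cexp (2 * π * I * (c - m * τ)) *
      (cexp (-(2 * π * I * (m + n : ℤ) * t)) * f t) := by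
    calc G (t + τ)
        = (-1) ^ n * (cexp (-(2 * π * I * m * (t + τ))) * cexp (-(2 * π * I) * (n * t - c))) *
            f t := by simp only [G, hf_tau]; ring
      _ = (-1) ^ n * (cexp (2 * π * I * (c - m * τ)) * cexp (-(2 * π * I * (m + n : ℤ) * t))) *
            f t := by rw [← Complex.exp_add, ← Complex.exp_add]; push_cast; ring_nf
      _ = _ := by ring
  calc unitFourierCoeff (fun t : ℝ ↦ f t) m
      = ∫ t in (0 : ℝ)..1, G (t + τ) :=
        (hG_diff.intervalIntegral_comp_add_of_periodic (p := 1) (by simpa using hG_per) τ).symm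
    _ = _ := by simp only [h_shift, intervalIntegral.integral_const_mul]; rfl

theorem unitFourierCoeff_eq_zero_of_mem_thetaSpace (hf : f ∈ thetaSpace τ c n) (hn : 0 < n)
    (h : ∀ j < n, unitFourierCoeff (fun t : ℝ ↦ f t) j = 0) (m : ℤ) :
    unitFourierCoeff (fun t : ℝ ↦ f t) m = 0 := by
  refine Int.forall_of_forall_Ico_of_add_iff (P := fun m ↦ unitFourierCoeff (fun t : ℝ ↦ f t) m = 0)
    (Int.natCast_pos.mpr hn) (fun m ↦ ?_) (fun j hj hjn ↦ ?_) m
  · have hK : (-1) ^ n * cexp (2 * π * I * (c - m * τ)) ≠ 0 :=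
      mul_ne_zero (pow_ne_zero _ (neg_ne_zero.mpr one_ne_zero)) (Complex.exp_ne_zero _)
    rw [unitFourierCoeff_eq_mul_of_mem_thetaSpace hf m, mul_eq_zero, or_iff_right hK]
  · lift j to ℕ using hj
    exact h j (by exact_mod_cast hjn)

theorem eq_zero_of_mem_thetaSpace (hf : f ∈ thetaSpace τ c n) (hn : 0 < n)
    (h : ∀ j < n, unitFourierCoeff (fun t : ℝ ↦ f t) j = 0) : f = 0 :=
  hf.1.eq_zero_of_forall_ofReal <| congrFun <|
    Periodic.eq_zero_of_unitFourierCoeff_eq_zero (hf.1.continuous.comp continuous_ofReal)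
      (fun t ↦ by simpa using hf.2.1 t) (unitFourierCoeff_eq_zero_of_mem_thetaSpace hf hn h)

end ThetaSpace

section ThetaBasis

variable {τ c : ℂ} {n : ℕ}

/-- Chosen so that `jacobiTheta₂_add_left'` produces exactly the multiplier `(-1)ⁿ e^{-2πi(nz - c)}`
of `thetaSpace` for `thetaBasis`. -/
noncomputable def thetaBasisShift (τ c : ℂ) (n j : ℕ) : ℂ := j * τ - c - n * (τ + 1) / 2

noncomputable def thetaBasis (τ c : ℂ) (n j : ℕ) (z : ℂ) : ℂ :=
  cexp (2 * π * I * j * z) * jacobiTheta₂ (n * z + thetaBasisShift τ c n j) (n * τ)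

theorem im_natCast_mul_pos (hτ : 0 < τ.im) (hn : 0 < n) : 0 < ((n : ℂ) * τ).im := by
  simpa using mul_pos (Nat.cast_pos.mpr hn) hτ

theorem thetaBasis_mem_thetaSpace (hτ : 0 < τ.im) (hn : 0 < n) (j : ℕ) :
    thetaBasis τ c n j ∈ thetaSpace τ c n := by
  refine ⟨fun z ↦ ?_, fun z ↦ ?_, fun z ↦ ?_⟩
  · have := differentiableAt_jacobiTheta₂_fst (n * z + thetaBasisShift τ c n j)
      (im_natCast_mul_pos hτ hn)
    unfold thetaBasis
    fun_prop
  · have h_exp : cexp (2 * π * I * j * (z + 1)) = cexp (2 * π * I * j * z) := by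
      rw [show 2 * π * I * j * (z + 1) = 2 * π * I * j * z + (j : ℤ) * (2 * π * I) by
        push_cast; ring, Complex.exp_add, exp_int_mul_two_pi_mul_I, mul_one]
    have h_per : Periodic (jacobiTheta₂ · (n * τ)) 1 := fun w ↦ jacobiTheta₂_add_left w _
    have h_theta := h_per.nat_mul n (n * z + thetaBasisShift τ c n j)
    rw [mul_one] at h_theta
    rw [thetaBasis, thetaBasis, h_exp, mul_add_one, add_right_comm, h_theta]
  · have h_arg : (n : ℂ) * (z + τ) + thetaBasisShift τ c n j =
        n * z + thetaBasisShift τ c n j + n * τ := by ring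
    rw [thetaBasis, thetaBasis, h_arg, jacobiTheta₂_add_left', ← exp_pi_mul_I,
      ← Complex.exp_nat_mul]
    calc _ = cexp (2 * π * I * j * (z + τ) +
              -π * I * (n * τ + 2 * (n * z + thetaBasisShift τ c n j))) *
            jacobiTheta₂ (n * z + thetaBasisShift τ c n j) (n * τ) := by
          rw [Complex.exp_add]; ring
      _ = cexp (n * (π * I) + -(2 * π * I) * (n * z - c) + 2 * π * I * j * z) *
            jacobiTheta₂ (n * z + thetaBasisShift τ c n j) (n * τ) := by
          rw [thetaBasisShift]; ring_nf
      _ = _ := by rw [Complex.exp_add, Complex.exp_add]; ring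

theorem hasSum_thetaBasis (hτ : 0 < τ.im) (hn : 0 < n) (j : ℕ) (z : ℂ) :
    HasSum (fun k : ℤ ↦ jacobiTheta₂_term k (thetaBasisShift τ c n j) (n * τ) *
      cexp (2 * π * I * (k * n + j : ℤ) * z)) (thetaBasis τ c n j z) := by
  have h_term (k : ℤ) : cexp (2 * π * I * j * z) *
      jacobiTheta₂_term k (n * z + thetaBasisShift τ c n j) (n * τ) =
      jacobiTheta₂_term k (thetaBasisShift τ c n j) (n * τ) *
        cexp (2 * π * I * (k * n + j : ℤ) * z) := by
    simp only [jacobiTheta₂_term, ← Complex.exp_add]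
    push_cast
    ring_nf
  have h_sum := (hasSum_jacobiTheta₂_term (n * z + thetaBasisShift τ c n j)
    (im_natCast_mul_pos hτ hn)).mul_left (cexp (2 * π * I * j * z))
  simp only [h_term] at h_sum
  exact h_sum

theorem unitFourierCoeff_thetaBasis (hτ : 0 < τ.im) (hn : 0 < n) {j m : ℕ} (hj : j < n)
    (hm : m < n) :
    unitFourierCoeff (fun t : ℝ ↦ thetaBasis τ c n j t) m = if m = j then 1 else 0 := by
  have h_coeff := hasSum_unitFourierCoeff_of_hasSum (ℓ := fun k : ℤ ↦ k * n + j)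
    ((summable_jacobiTheta₂_term_iff _ _).mpr (im_natCast_mul_pos hτ hn)).norm
    (fun t ↦ hasSum_thetaBasis (c := c) hτ hn j t) m
  have h_single : ∀ k : ℤ, k ≠ 0 → (k * n + j : ℤ) ≠ m := fun k hk hkm ↦ by
    rcases hk.lt_or_gt with hk | hk <;> nlinarith
  rw [h_coeff.unique (hasSum_single 0 fun k hk ↦ if_neg (h_single k hk))]
  simp [jacobiTheta₂_term, eq_comm]

end ThetaBasis

section Coefficients

variable (τ c : ℂ) (n : ℕ)

noncomputable def thetaSpaceCoeffs : thetaSpace τ c n →ₗ[ℂ] (Fin n → ℂ) where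
  toFun f j := unitFourierCoeff (fun t : ℝ ↦ f.1 t) j
  map_add' f g := funext fun j ↦
    unitFourierCoeff_add (f.2.1.continuous.comp continuous_ofReal)
      (g.2.1.continuous.comp continuous_ofReal) j
  map_smul' a f := funext fun j ↦ unitFourierCoeff_smul a (fun t : ℝ ↦ f.1 t) j

variable {τ c n}

theorem thetaSpaceCoeffs_injective (hn : 0 < n) : Function.Injective (thetaSpaceCoeffs τ c n) := by
  refine (injective_iff_map_eq_zero _).mpr fun f hf ↦ Subtype.ext ?_
  exact eq_zero_of_mem_thetaSpace f.2 hn fun j hj ↦ congrFun hf ⟨j, hj⟩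

theorem thetaSpaceCoeffs_surjective (hτ : 0 < τ.im) (hn : 0 < n) :
    Function.Surjective (thetaSpaceCoeffs τ c n) := by
  let θ (j : Fin n) : thetaSpace τ c n := ⟨thetaBasis τ c n j, thetaBasis_mem_thetaSpace hτ hn j⟩
  have hθ (j : Fin n) : thetaSpaceCoeffs τ c n (θ j) = Pi.single j 1 := funext fun m ↦ by
    simp only [thetaSpaceCoeffs, LinearMap.coe_mk, AddHom.coe_mk, Pi.single_apply, Fin.ext_iff]
    exact unitFourierCoeff_thetaBasis hτ hn j.2 m.2
  intro v
  refine ⟨∑ j, v j • θ j, ?_⟩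
  simp [hθ, ← Pi.single_smul, Finset.univ_sum_single]

end Coefficients

/-- `Θ_{n,c}(Γ)` is an `n`-dimensional complex vector space. -/
theorem thetaSpace_finrank (τ : ℂ) (hτ : 0 < τ.im) (c : ℂ) (n : ℕ) (hn : 0 < n) :
    Module.finrank ℂ (thetaSpace τ c n) = n :=
  (LinearEquiv.ofBijective (thetaSpaceCoeffs τ c n)
    ⟨thetaSpaceCoeffs_injective hn, thetaSpaceCoeffs_surjective hτ hn⟩).finrank_eq.trans
    (Module.finrank_fin_fun ℂ)
end
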